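/- With notation as in the rank-2 CY torus setup (weight columns grouped as d^i_j χ_i with Σ_i d^i χ_i = 0, χ_i pairwise non-proportional primitive vectors ordered counterclockwise), fix i and suppose −χ_i is not among the χ_j. Let σ be a chamber cone adjacent to the ray ℝ_{≥0}·(−χ_i). Then min{ (χ_i, λ) : λ ∈ σ^∨ ∩ X_*(T), (χ_i, λ) > 0 } = 1, where σ^∨ is the dual cone; consequently the length of the scheme-theoretic preimage under Horn uniformization of the wall curve in the corresponding chart is d^i = Σ_j d^i_j. -/
import Mathlib


/-- Pairing between characters and cocharacters of a rank-2 torus. -/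
def pair2 (x y : ℤ × ℤ) : ℤ := x.1 * y.1 + x.2 * y.2

/-!
STATEMENT 5: In the rank-2 setup, fix a wall direction `χ = χ_i` (primitive) and the
adjacent chamber generator `χ' = χ_{i+1}` (linearly independent from `χ`).  The key
lattice-geometric claim: the minimum positive value of the linear form `(χ_i, ·)` on
lattice points of the dual cone `σ^∨` (pairing nonnegatively with both `χ` and `χ'`)
equals `1`.  Consequently the length of the scheme-theoretic preimage under Horn
uniformization of the wall curve in the corresponding chart is `d^i = Σ_j d^i_j`,
the exponent `d^i` times this minimum.
-/
theorem dual_cone_min_pairing_eq_one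
    (χ χ' : ℤ × ℤ)
    -- `χ` is primitive
    (hprim : IsCoprime χ.1 χ.2)
    -- `χ` and `χ'` are linearly independent
    (hindep : χ.1 * χ'.2 - χ.2 * χ'.1 ≠ 0) :
    IsLeast {v : ℤ | 0 < v ∧ ∃ lam : ℤ × ℤ,
        0 ≤ pair2 χ lam ∧ 0 ≤ pair2 χ' lam ∧ pair2 χ lam = v} 1 ∧
    -- consequently, multiplying by `d^i` : the values `d^i (χ_i, λ)` have least
    -- positive value `d^i`
    ∀ d : ℤ, 0 < d → IsLeast {v : ℤ | 0 < v ∧ ∃ lam : ℤ × ℤ,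
        0 ≤ pair2 χ lam ∧ 0 ≤ pair2 χ' lam ∧ d * pair2 χ lam = v} d := by
  obtain ⟨a, b, hab⟩ := hprim
  -- Bézout point and shift along the kernel line of (χ, ·)
  set D : ℤ := χ.1 * χ'.2 - χ.2 * χ'.1 with hDdef
  set c0 : ℤ := χ'.1 * a + χ'.2 * b with hc0
  set t : ℤ := |c0| * D with htdef
  have hD2 : 1 ≤ D ^ 2 := by
    rcases lt_or_gt_of_ne hindep with h | h <;> nlinarith
  set lam : ℤ × ℤ := (a - t * χ.2, b + t * χ.1) with hlamdef
  have h1 : pair2 χ lam = 1 := by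
    simp only [pair2, hlamdef]
    nlinarith [hab]
  have h2 : 0 ≤ pair2 χ' lam := by
    simp only [pair2, hlamdef]
    have h3 : χ'.1 * (a - t * χ.2) + χ'.2 * (b + t * χ.1) = c0 + |c0| * D ^ 2 := by
      simp only [hc0, htdef, hDdef]; ring
    rw [h3]
    have habs : -c0 ≤ |c0| := neg_le_abs c0
    nlinarith [abs_nonneg c0]
  refine ⟨⟨⟨one_pos, lam, by simp [h1], h2, h1⟩, ?_⟩, ?_⟩
  · rintro v ⟨hv, -⟩
    exact hv
  · intro d hd
    refine ⟨⟨hd, lam, by simp [h1], h2, by rw [h1, mul_one]⟩, ?_⟩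
    rintro v ⟨hv, lam', -, -, h3'⟩
    have hp : 0 < pair2 χ lam' := by
      by_contra h
      push_neg at h
      nlinarith
    nlinarith
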